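/- arXiv:2605.12881 — 2 statements merged into one kernel-verified Lean document; each statement's English description precedes it below -/
import Mathlib

section
/- Let (Θ̂₁,…,Θ̂_T) be any tuple of p×p real matrices. Suppose there exist p×p real matrices Ẽ₁,…,Ẽ_T such that: Ẽ₁ = 0; for each 2 ≤ t ≤ T, if Θ̂_t ≠ Θ̂_{t−1} then Ẽ_t = (Θ̂_t − Θ̂_{t−1})/‖Θ̂_t − Θ̂_{t−1}‖_F, and if Θ̂_t = Θ̂_{t−1} then ‖Ẽ_t‖_F ≤ 1; and for every 1 ≤ t ≤ T, (1/T)·∑_{r=t}^{T} (Θ̂_r − X_r X_rᵀ) + λ·Ẽ_t = 0. Then G(Θ̂₁,…,Θ̂_T) ≤ G(Θ₁,…,Θ_T) for every tuple (Θ₁,…,Θ_T) of p×p real matrices; that is, (Θ̂_t) is a global minimizer of G. -/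
open Matrix Finset

/-- Frobenius norm of a real `p × p` matrix. -/
noncomputable def frob {p : ℕ} (A : Matrix (Fin p) (Fin p) ℝ) : ℝ :=
  Real.sqrt (∑ u, ∑ v, (A u v) ^ 2)

/-- The Group Fused least-squares LASSO (GFlsL) objective, with time indices `t = 1, …, T`. -/
noncomputable def gflsl (p T : ℕ) (X : ℕ → Fin p → ℝ) (lam : ℝ)
    (Θ : ℕ → Matrix (Fin p) (Fin p) ℝ) : ℝ :=
  (1 / (2 * (T : ℝ))) *
      ∑ t ∈ Finset.Icc 1 T,
        ((Θ t)ᵀ * Θ t - (Matrix.vecMulVec (X t) (X t))ᵀ * Θ t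
          - (Θ t)ᵀ * Matrix.vecMulVec (X t) (X t)).trace
    + lam * ∑ t ∈ Finset.Icc 2 T, frob (Θ t - Θ (t - 1))

/-!
With `S_t = X_t X_tᵀ`, each loss term `‖Θ_t‖² - 2⟪S_t, Θ_t⟫` lies above its tangent at `Θ̂_t`,
and each penalty term `‖Θ_t - Θ_{t-1}‖` above the affine minorant given by the subgradient `Ẽ_t`.
Hence `G(Θ) - G(Θ̂)` is at least a linear form in `Θ - Θ̂`; summation by parts turns it into a
combination of the stationarity equations, so it vanishes. Matrices are flattened to vectors of
`ℝ^(p × p)`, where the Frobenius norm and trace pairing become the Euclidean norm and inner product.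
-/

open scoped RealInnerProductSpace

theorem sum_Icc_sub_sum_Icc_add_one {M : Type*} [AddCommGroup M] (g : ℕ → M) {t T : ℕ}
    (ht : t ≤ T) : ∑ r ∈ Icc t T, g r - ∑ r ∈ Icc (t + 1) T, g r = g t := by
  rw [← add_sum_Ioc_eq_sum_Icc ht, Icc_add_one_left_eq_Ioc, add_sub_cancel_right]

section FusedObjective

variable {V : Type*} [NormedAddCommGroup V] [InnerProductSpace ℝ V]

theorem norm_add_inner_sub_le_norm {d₀ f : V} (hne : d₀ ≠ 0 → f = ‖d₀‖⁻¹ • d₀)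
    (hzero : d₀ = 0 → ‖f‖ ≤ 1) (d : V) : ‖d₀‖ + ⟪f, d - d₀⟫ ≤ ‖d‖ := by
  rcases eq_or_ne d₀ 0 with rfl | h
  · simpa using (real_inner_le_norm f d).trans (mul_le_of_le_one_left (norm_nonneg d) (hzero rfl))
  · have hpos : 0 < ‖d₀‖ := norm_pos_iff.2 h
    rw [hne h, real_inner_smul_left, inner_sub_right, real_inner_self_eq_norm_sq,
      mul_sub, sq, inv_mul_cancel_left₀ hpos.ne', add_sub_cancel, inv_mul_le_iff₀ hpos]
    exact real_inner_le_norm d₀ d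

theorem norm_sq_sub_two_inner_add_two_inner_le (s x₀ x : V) :
    ‖x₀‖ ^ 2 - 2 * ⟪s, x₀⟫ + 2 * ⟪x₀ - s, x - x₀⟫ ≤ ‖x‖ ^ 2 - 2 * ⟪s, x⟫ := by
  have h := sq_nonneg ‖x - x₀‖
  rw [norm_sub_sq_real] at h
  rw [inner_sub_left, inner_sub_right, inner_sub_right, real_inner_self_eq_norm_sq,
    real_inner_comm x₀ x] at *
  linarith

theorem sum_inner_sub_succ_by_parts (N δ : ℕ → V) {k : ℕ} (hk : 1 ≤ k) :
    ∑ t ∈ Icc 1 k, ⟪N t - N (t + 1), δ t⟫ =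
      ⟪N 1, δ 1⟫ + ∑ t ∈ Icc 2 k, ⟪N t, δ t - δ (t - 1)⟫ - ⟪N (k + 1), δ k⟫ := by
  induction k, hk using Nat.le_induction with
  | base => simp [inner_sub_left]
  | succ k hk ih =>
    rw [sum_Icc_succ_top (by omega), sum_Icc_succ_top (by omega), ih, Nat.add_sub_cancel]
    simp only [inner_sub_left, inner_sub_right]
    ring

theorem kkt_linear_term_eq_zero {T : ℕ} (hT : 1 ≤ T) {c lam : ℝ} {g e : ℕ → V} (he₁ : e 1 = 0)
    (hstat : ∀ t ∈ Icc 1 T, c • ∑ r ∈ Icc t T, g r + lam • e t = 0) (δ : ℕ → V) :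
    c * ∑ t ∈ Icc 1 T, ⟪g t, δ t⟫ + lam * ∑ t ∈ Icc 2 T, ⟪e t, δ t - δ (t - 1)⟫ = 0 := by
  set N : ℕ → V := fun t ↦ ∑ r ∈ Icc t T, g r
  have hN₁ : c • N 1 = 0 := by simpa [he₁] using hstat 1 (by simp [hT])
  have hNT : N (T + 1) = 0 := by simp [N]
  have he : ∀ t ∈ Icc 2 T, lam • e t = -(c • N t) := fun t ht ↦
    eq_neg_of_add_eq_zero_right (hstat t (by simp at ht ⊢; omega))
  rw [add_eq_zero_iff_eq_neg]
  calc c * ∑ t ∈ Icc 1 T, ⟪g t, δ t⟫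
      = c * ∑ t ∈ Icc 1 T, ⟪N t - N (t + 1), δ t⟫ := by
        congr 1
        exact sum_congr rfl fun t ht ↦ by
          rw [sum_Icc_sub_sum_Icc_add_one g (mem_Icc.1 ht).2]
    _ = ⟪c • N 1, δ 1⟫ + ∑ t ∈ Icc 2 T, ⟪c • N t, δ t - δ (t - 1)⟫ := by
        simp only [sum_inner_sub_succ_by_parts N δ hT, hNT, inner_zero_left, sub_zero,
          real_inner_smul_left, mul_add, mul_sum]
    _ = -(lam * ∑ t ∈ Icc 2 T, ⟪e t, δ t - δ (t - 1)⟫) := by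
        rw [hN₁, inner_zero_left, zero_add, mul_sum, ← sum_neg_distrib]
        exact sum_congr rfl fun t ht ↦ by
          rw [← real_inner_smul_left, he t ht, inner_neg_left, neg_neg]

noncomputable def fusedObjective (T : ℕ) (lam : ℝ) (s θ : ℕ → V) : ℝ :=
  (1 / (2 * (T : ℝ))) * ∑ t ∈ Icc 1 T, (‖θ t‖ ^ 2 - 2 * ⟪s t, θ t⟫)
    + lam * ∑ t ∈ Icc 2 T, ‖θ t - θ (t - 1)‖

theorem fusedObjective_le_of_kkt {T : ℕ} (hT : 1 ≤ T) {lam : ℝ} (hlam : 0 ≤ lam)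
    {s θ₀ e : ℕ → V} (he₁ : e 1 = 0)
    (hsub : ∀ t ∈ Icc 2 T, ∀ d, ‖θ₀ t - θ₀ (t - 1)‖ + ⟪e t, d - (θ₀ t - θ₀ (t - 1))⟫ ≤ ‖d‖)
    (hstat : ∀ t ∈ Icc 1 T, (1 / (T : ℝ)) • ∑ r ∈ Icc t T, (θ₀ r - s r) + lam • e t = 0)
    (θ : ℕ → V) : fusedObjective T lam s θ₀ ≤ fusedObjective T lam s θ := by
  set δ : ℕ → V := fun t ↦ θ t - θ₀ t
  have hlin := kkt_linear_term_eq_zero hT he₁ hstat δ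
  have hloss : ∑ t ∈ Icc 1 T, (‖θ₀ t‖ ^ 2 - 2 * ⟪s t, θ₀ t⟫ + 2 * ⟪θ₀ t - s t, δ t⟫)
      ≤ ∑ t ∈ Icc 1 T, (‖θ t‖ ^ 2 - 2 * ⟪s t, θ t⟫) :=
    sum_le_sum fun t _ ↦ norm_sq_sub_two_inner_add_two_inner_le (s t) (θ₀ t) (θ t)
  have hpen : ∑ t ∈ Icc 2 T, (‖θ₀ t - θ₀ (t - 1)‖ + ⟪e t, δ t - δ (t - 1)⟫)
      ≤ ∑ t ∈ Icc 2 T, ‖θ t - θ (t - 1)‖ :=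
    sum_le_sum fun t ht ↦ by
      have h := hsub t ht (θ t - θ (t - 1))
      rwa [sub_sub_sub_comm] at h
  rw [sum_add_distrib, ← mul_sum] at hloss
  rw [sum_add_distrib] at hpen
  have hT₀ : (0 : ℝ) < T := by exact_mod_cast hT
  have hhalf : 1 / (2 * (T : ℝ)) * 2 = 1 / T := by field_simp
  have hloss' := mul_le_mul_of_nonneg_left hloss (by positivity : (0 : ℝ) ≤ 1 / (2 * T))
  rw [mul_add, ← mul_assoc, hhalf] at hloss'
  have hpen' := mul_le_mul_of_nonneg_left hpen hlam
  rw [mul_add] at hpen'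
  unfold fusedObjective
  linarith

namespace Matrix

variable {m n : Type*}

def flatten : Matrix m n ℝ ≃ₗ[ℝ] EuclideanSpace ℝ (m × n) :=
  (LinearEquiv.curry ℝ ℝ m n).symm ≪≫ₗ (WithLp.linearEquiv 2 ℝ (m × n → ℝ)).symm

@[simp]
theorem flatten_apply (A : Matrix m n ℝ) (x : m × n) : A.flatten x = A x.1 x.2 := rfl

theorem inner_flatten [Fintype m] [Fintype n] (A B : Matrix m n ℝ) :
    ⟪A.flatten, B.flatten⟫ = (Aᵀ * B).trace := by
  simp only [PiLp.inner_apply, flatten_apply, RCLike.inner_apply, Real.ringHom_apply, mul_comm,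
    Fintype.sum_prod_type, trace, diag_apply, mul_apply, transpose_apply]
  exact sum_comm

theorem trace_quadratic_loss [Fintype m] (S Θ : Matrix m m ℝ) :
    (Θᵀ * Θ - Sᵀ * Θ - Θᵀ * S).trace = ‖Θ.flatten‖ ^ 2 - 2 * ⟪S.flatten, Θ.flatten⟫ := by
  rw [trace_sub, trace_sub, ← inner_flatten, ← inner_flatten, ← inner_flatten,
    real_inner_self_eq_norm_sq, real_inner_comm Θ.flatten]
  ring

end Matrix

theorem frob_eq_norm_flatten {p : ℕ} (A : Matrix (Fin p) (Fin p) ℝ) : frob A = ‖A.flatten‖ := by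
  simp [frob, EuclideanSpace.norm_eq, Fintype.sum_prod_type]

theorem gflsl_eq_fusedObjective (p T : ℕ) (X : ℕ → Fin p → ℝ) (lam : ℝ)
    (Θ : ℕ → Matrix (Fin p) (Fin p) ℝ) :
    gflsl p T X lam Θ =
      fusedObjective T lam (fun t ↦ (vecMulVec (X t) (X t)).flatten) (fun t ↦ (Θ t).flatten) := by
  simp only [gflsl, fusedObjective, trace_quadratic_loss, frob_eq_norm_flatten, map_sub]

theorem stmt1_general (p T : ℕ) (hT : 1 ≤ T)
    (X : ℕ → Fin p → ℝ) (lam : ℝ) (hlam : 0 < lam)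
    (Θhat : ℕ → Matrix (Fin p) (Fin p) ℝ)
    (E : ℕ → Matrix (Fin p) (Fin p) ℝ)
    (hE1 : E 1 = 0)
    (hE : ∀ t ∈ Finset.Icc 2 T,
      (Θhat t ≠ Θhat (t - 1) →
        E t = (frob (Θhat t - Θhat (t - 1)))⁻¹ • (Θhat t - Θhat (t - 1))) ∧
      (Θhat t = Θhat (t - 1) → frob (E t) ≤ 1))
    (hstat : ∀ t ∈ Finset.Icc 1 T,
      (1 / (T : ℝ)) • (∑ r ∈ Finset.Icc t T,
          (Θhat r - Matrix.vecMulVec (X r) (X r))) + lam • E t = 0) :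
    ∀ Θ : ℕ → Matrix (Fin p) (Fin p) ℝ,
      gflsl p T X lam Θhat ≤ gflsl p T X lam Θ := by
  intro Θ
  rw [gflsl_eq_fusedObjective, gflsl_eq_fusedObjective]
  refine fusedObjective_le_of_kkt hT hlam.le (e := fun t ↦ (E t).flatten) (by simp [hE1])
    (fun t ht ↦ ?_) (fun t ht ↦ by simpa using congrArg flatten (hstat t ht)) _
  simp only [← map_sub]
  refine norm_add_inner_sub_le_norm (fun hne ↦ ?_) (fun heq ↦ ?_)
  · rw [(hE t ht).1 fun h ↦ hne (by rw [h, sub_self, map_zero]), map_smul, frob_eq_norm_flatten]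
  · simpa [← frob_eq_norm_flatten] using (hE t ht).2 (flatten.injective (sub_eq_zero.1 heq))

/-- if a tuple satisfies the subgradient (KKT) conditions, then it is a
global minimizer of the GFlsL objective over all tuples of `p × p` real matrices. -/
theorem stmt1 (p T : ℕ) (hp : 1 ≤ p) (hT : 1 ≤ T)
    (X : ℕ → Fin p → ℝ) (lam : ℝ) (hlam : 0 < lam)
    (Θhat : ℕ → Matrix (Fin p) (Fin p) ℝ)
    (E : ℕ → Matrix (Fin p) (Fin p) ℝ)
    (hE1 : E 1 = 0)
    (hE : ∀ t ∈ Finset.Icc 2 T,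
      (Θhat t ≠ Θhat (t - 1) →
        E t = (frob (Θhat t - Θhat (t - 1)))⁻¹ • (Θhat t - Θhat (t - 1))) ∧
      (Θhat t = Θhat (t - 1) → frob (E t) ≤ 1))
    (hstat : ∀ t ∈ Finset.Icc 1 T,
      (1 / (T : ℝ)) • (∑ r ∈ Finset.Icc t T,
          (Θhat r - Matrix.vecMulVec (X r) (X r))) + lam • E t = 0) :
    ∀ Θ : ℕ → Matrix (Fin p) (Fin p) ℝ,
      gflsl p T X lam Θhat ≤ gflsl p T X lam Θ :=
  stmt1_general p T hT X lam hlam Θhat E hE1 hE hstat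
end FusedObjective
end

section
/- Suppose (Θ̂₁,…,Θ̂_T) is a tuple of positive definite p×p real matrices that minimizes the GFlsL objective G over all tuples of positive definite p×p real matrices, and suppose that for some integers 1 ≤ s < t ≤ T+1 there is a matrix Σ̂ with Θ̂_r = Σ̂ for all s ≤ r ≤ t−1 (the estimator is constant on the block {s,…,t−1}). Then ‖Σ̂ − (1/(t−s))·∑_{r=s}^{t−1} X_r X_rᵀ‖_F ≤ 2λT/(t−s); that is, the common value on the block deviates from the block sample second moment by at most 2λT/(t−s) in Frobenius norm. -/
open Matrix Finset

/-! Shrinking the block value towards the block sample second moment `M`,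
`Σ̂ ↦ Σ̂ - ε (Σ̂ - M) = (1 - ε) Σ̂ + ε M`, keeps positive definiteness for `0 ≤ ε < 1` because `M`
is positive semidefinite. It lowers the least-squares part of the objective by
`(t - s) (2ε - ε²) ‖Σ̂ - M‖² / (2T)`, and it raises the fused penalty only through the two jumps
at the ends `s` and `t` of the block, each by at most `ε ‖Σ̂ - M‖`. Minimality of `Θ̂`, divided by
`ε` and with `ε → 0`, gives `(t - s) ‖Σ̂ - M‖² ≤ 2λT ‖Σ̂ - M‖`. -/

section Frobenius

variable {p : ℕ}

attribute [local instance] Matrix.frobeniusNormedAddCommGroup Matrix.frobeniusNormedSpace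

lemma frob_eq_norm (A : Matrix (Fin p) (Fin p) ℝ) : frob A = ‖A‖ := by
  simp [frob, Matrix.frobenius_norm_def, Real.sqrt_eq_rpow]

lemma frob_nonneg (A : Matrix (Fin p) (Fin p) ℝ) : 0 ≤ frob A := Real.sqrt_nonneg _

lemma frob_zero : frob (0 : Matrix (Fin p) (Fin p) ℝ) = 0 := by
  simp only [frob_eq_norm, norm_zero]

lemma frob_add_le (A B : Matrix (Fin p) (Fin p) ℝ) : frob (A + B) ≤ frob A + frob B := by
  simpa only [frob_eq_norm] using norm_add_le A B

lemma frob_neg (A : Matrix (Fin p) (Fin p) ℝ) : frob (-A) = frob A := by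
  simp only [frob_eq_norm, norm_neg]

lemma frob_smul (c : ℝ) (A : Matrix (Fin p) (Fin p) ℝ) : frob (c • A) = |c| * frob A := by
  simp only [frob_eq_norm, norm_smul, Real.norm_eq_abs]

lemma sq_frob (A : Matrix (Fin p) (Fin p) ℝ) : frob A ^ 2 = (Aᵀ * A).trace := by
  rw [frob, Real.sq_sqrt (by positivity), Matrix.trace, Finset.sum_comm]
  simp [Matrix.mul_apply, sq]

end Frobenius

section FitLoss

variable {n : Type*} [Fintype n]

def fitLoss (S Θ : Matrix n n ℝ) : ℝ := (Θᵀ * Θ - Sᵀ * Θ - Θᵀ * S).trace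

lemma fitLoss_add (S Θ E : Matrix n n ℝ) :
    fitLoss S (Θ + E) = fitLoss S Θ + 2 * (Eᵀ * (Θ - S)).trace + (Eᵀ * E).trace := by
  have hΘ : (Θᵀ * E).trace = (Eᵀ * Θ).trace := by
    rw [← Matrix.trace_transpose, Matrix.transpose_mul, Matrix.transpose_transpose]
  have hS : (Sᵀ * E).trace = (Eᵀ * S).trace := by
    rw [← Matrix.trace_transpose, Matrix.transpose_mul, Matrix.transpose_transpose]
  simp only [fitLoss, Matrix.transpose_add, Matrix.add_mul, Matrix.mul_add, Matrix.mul_sub,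
    Matrix.trace_add, Matrix.trace_sub]
  linear_combination hΘ - hS

lemma sum_fitLoss_sub_smul_deviation {ι : Type*} {B : Finset ι} (hB : B.Nonempty)
    (S : ι → Matrix n n ℝ) (Sig D : Matrix n n ℝ)
    (hD : D = Sig - (1 / (B.card : ℝ)) • ∑ r ∈ B, S r) (ε : ℝ) :
    ∑ r ∈ B, fitLoss (S r) (Sig - ε • D)
      = ∑ r ∈ B, fitLoss (S r) Sig + B.card * (ε ^ 2 - 2 * ε) * (Dᵀ * D).trace := by
  have hdev : ∑ r ∈ B, (Sig - S r) = (B.card : ℝ) • D := by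
    have hcard : (B.card : ℝ) ≠ 0 := by exact_mod_cast hB.card_pos.ne'
    rw [hD, Finset.sum_sub_distrib, Finset.sum_const, smul_sub, smul_smul,
      mul_one_div_cancel hcard, one_smul, Nat.cast_smul_eq_nsmul]
  simp only [sub_eq_add_neg Sig (ε • D), fitLoss_add, Finset.sum_add_distrib, ← Finset.mul_sum,
    ← Matrix.trace_sum, hdev, Finset.sum_const]
  simp only [Matrix.transpose_neg, Matrix.transpose_smul, Matrix.neg_mul, Matrix.mul_neg,
    Matrix.smul_mul, Matrix.mul_smul, Matrix.trace_neg, Matrix.trace_smul, smul_eq_mul]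
  ring

end FitLoss

section Penalty

variable {p : ℕ}

noncomputable def fusedPenalty (T : ℕ) (Θ : ℕ → Matrix (Fin p) (Fin p) ℝ) : ℝ :=
  ∑ t ∈ Icc 2 T, frob (Θ t - Θ (t - 1))

lemma gflsl_eq (T : ℕ) (X : ℕ → Fin p → ℝ) (lam : ℝ) (Θ : ℕ → Matrix (Fin p) (Fin p) ℝ) :
    gflsl p T X lam Θ = 1 / (2 * (T : ℝ)) * ∑ t ∈ Icc 1 T, fitLoss (vecMulVec (X t) (X t)) (Θ t)
      + lam * fusedPenalty T Θ := rfl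

lemma frob_indicator_Ico_sub_le (s t r : ℕ) (E : Matrix (Fin p) (Fin p) ℝ) :
    frob ((if r ∈ Ico s t then E else 0) - if r - 1 ∈ Ico s t then E else 0)
      ≤ (if r = s then frob E else 0) + if r = t then frob E else 0 := by
  simp only [Finset.mem_Ico]
  split_ifs <;> first
    | omega
    | simp [frob_neg, frob_zero, frob_nonneg]

lemma fusedPenalty_add_indicator_le (T s t : ℕ) (Θ : ℕ → Matrix (Fin p) (Fin p) ℝ)
    (E : Matrix (Fin p) (Fin p) ℝ) :
    fusedPenalty T (fun r => Θ r + if r ∈ Ico s t then E else 0)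
      ≤ fusedPenalty T Θ + 2 * frob E := by
  have hjump : ∀ r, frob ((Θ r + if r ∈ Ico s t then E else 0)
      - (Θ (r - 1) + if r - 1 ∈ Ico s t then E else 0))
      ≤ frob (Θ r - Θ (r - 1)) + ((if r = s then frob E else 0) + if r = t then frob E else 0) :=
    fun r => calc
      _ = frob ((Θ r - Θ (r - 1))
          + ((if r ∈ Ico s t then E else 0) - if r - 1 ∈ Ico s t then E else 0)) := by
        congr 1; abel
      _ ≤ _ := (frob_add_le _ _).trans (add_le_add_right (frob_indicator_Ico_sub_le s t r E) _)
  have hcount : ∀ k, ∑ r ∈ Icc 2 T, (if r = k then frob E else 0) ≤ frob E := fun k => by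
    rw [Finset.sum_ite_eq']
    split_ifs
    exacts [le_rfl, frob_nonneg E]
  calc fusedPenalty T _
      ≤ ∑ r ∈ Icc 2 T, (frob (Θ r - Θ (r - 1))
          + ((if r = s then frob E else 0) + if r = t then frob E else 0)) :=
        Finset.sum_le_sum fun r _ => hjump r
    _ = fusedPenalty T Θ + ((∑ r ∈ Icc 2 T, if r = s then frob E else 0)
          + ∑ r ∈ Icc 2 T, if r = t then frob E else 0) := by
        rw [Finset.sum_add_distrib, Finset.sum_add_distrib, fusedPenalty]
    _ ≤ _ := by linarith [hcount s, hcount t]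

end Penalty

lemma nonneg_at_zero_of_forall_Ioo_nonneg {f : ℝ → ℝ} (hf : ContinuousAt f 0)
    (h : ∀ ε ∈ Set.Ioo (0 : ℝ) 1, 0 ≤ f ε) : 0 ≤ f 0 :=
  ge_of_tendsto (hf.tendsto.mono_left nhdsWithin_le_nhds)
    (by filter_upwards [Ioo_mem_nhdsGT one_pos] with ε hε using h ε hε)

lemma Matrix.PosDef.sub_smul_sub {n : Type*} [Fintype n] {A B : Matrix n n ℝ} (hA : A.PosDef)
    (hB : B.PosSemidef) {ε : ℝ} (hε : ε ∈ Set.Ico (0 : ℝ) 1) : (A - ε • (A - B)).PosDef := by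
  have hcomb : A - ε • (A - B) = (1 - ε) • A + ε • B := by module
  rw [hcomb]
  exact (hA.smul (sub_pos.mpr hε.2)).add_posSemidef (hB.smul hε.1)

lemma gflsl_add_block_perturbation_le {p T s t : ℕ} (hst : s < t) (hblock : Ico s t ⊆ Icc 1 T)
    (X : ℕ → Fin p → ℝ) {lam : ℝ} (hlam : 0 ≤ lam) (Θ : ℕ → Matrix (Fin p) (Fin p) ℝ)
    {Sig : Matrix (Fin p) (Fin p) ℝ} (hconst : ∀ r ∈ Ico s t, Θ r = Sig)
    {D : Matrix (Fin p) (Fin p) ℝ}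
    (hD : D = Sig - (1 / ((t : ℝ) - s)) • ∑ r ∈ Ico s t, vecMulVec (X r) (X r))
    {ε : ℝ} (hε : 0 ≤ ε) :
    gflsl p T X lam (fun r => Θ r + if r ∈ Ico s t then -(ε • D) else 0)
      ≤ gflsl p T X lam Θ
        + ε * (((t : ℝ) - s) * (ε - 2) / (2 * T) * frob D ^ 2 + 2 * lam * frob D) := by
  set S : ℕ → Matrix (Fin p) (Fin p) ℝ := fun r => vecMulVec (X r) (X r)
  have hcard : ((Ico s t).card : ℝ) = t - s := by
    rw [Nat.card_Ico, Nat.cast_sub hst.le]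
  have hfit : ∑ r ∈ Icc 1 T, fitLoss (S r) (Θ r + if r ∈ Ico s t then -(ε • D) else 0)
      = ∑ r ∈ Icc 1 T, fitLoss (S r) (Θ r) + ((t : ℝ) - s) * (ε ^ 2 - 2 * ε) * frob D ^ 2 := by
    rw [← sub_eq_iff_eq_add', ← Finset.sum_sub_distrib,
      ← Finset.sum_subset hblock fun r _ hr => by simp [hr]]
    have hB : (Ico s t).Nonempty := Finset.nonempty_Ico.mpr hst
    rw [← hcard] at hD
    rw [Finset.sum_congr rfl fun r hr => by rw [if_pos hr, hconst r hr, ← sub_eq_add_neg],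
      Finset.sum_sub_distrib, sum_fitLoss_sub_smul_deviation hB S Sig D hD, sq_frob, hcard]
    ring
  have hpen := fusedPenalty_add_indicator_le T s t Θ (-(ε • D))
  rw [frob_neg, frob_smul, abs_of_nonneg hε] at hpen
  rw [gflsl_eq, gflsl_eq, hfit]
  linear_combination mul_le_mul_of_nonneg_left hpen hlam

lemma posDef_add_block_perturbation {p T s t : ℕ} (hst : s < t) (hblock : Ico s t ⊆ Icc 1 T)
    (X : ℕ → Fin p → ℝ) {Θ : ℕ → Matrix (Fin p) (Fin p) ℝ} (hPD : ∀ r ∈ Icc 1 T, (Θ r).PosDef)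
    {Sig : Matrix (Fin p) (Fin p) ℝ} (hconst : ∀ r ∈ Ico s t, Θ r = Sig)
    {D : Matrix (Fin p) (Fin p) ℝ}
    (hD : D = Sig - (1 / ((t : ℝ) - s)) • ∑ r ∈ Ico s t, vecMulVec (X r) (X r))
    {ε : ℝ} (hε : ε ∈ Set.Ico (0 : ℝ) 1) :
    ∀ r ∈ Icc 1 T, (Θ r + if r ∈ Ico s t then -(ε • D) else 0).PosDef := by
  have hSig : Sig.PosDef := hconst s (by simp [hst]) ▸ hPD s (hblock (by simp [hst]))
  have hν : (0 : ℝ) < t - s := sub_pos.mpr (by exact_mod_cast hst)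
  have hmean : ((1 / ((t : ℝ) - s)) • ∑ r ∈ Ico s t, vecMulVec (X r) (X r)).PosSemidef :=
    (posSemidef_sum _ fun r _ => posSemidef_vecMulVec_self_star (X r)).smul (by positivity)
  intro r hr
  split_ifs with hrB
  · rw [hconst r hrB, ← sub_eq_add_neg, hD]
    exact hSig.sub_smul_sub hmean hε
  · simpa using hPD r hr

lemma le_div_of_mul_sq_le {F ν c : ℝ} (hF : 0 ≤ F) (hν : 0 < ν) (hc : 0 ≤ c)
    (h : ν * F ^ 2 ≤ c * F) : F ≤ c / ν := by
  rw [le_div_iff₀ hν]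
  rcases hF.eq_or_lt with rfl | hF
  · simpa using hc
  · nlinarith

theorem stmt4_general (p T : ℕ)
    (X : ℕ → Fin p → ℝ) (lam : ℝ) (hlam : 0 < lam)
    (Θhat : ℕ → Matrix (Fin p) (Fin p) ℝ)
    (hPD : ∀ t ∈ Finset.Icc 1 T, (Θhat t).PosDef)
    (hmin : ∀ Θ : ℕ → Matrix (Fin p) (Fin p) ℝ,
      (∀ t ∈ Finset.Icc 1 T, (Θ t).PosDef) →
      gflsl p T X lam Θhat ≤ gflsl p T X lam Θ)
    (s t : ℕ) (hs : 1 ≤ s) (hst : s < t) (ht : t ≤ T + 1)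
    (Sighat : Matrix (Fin p) (Fin p) ℝ)
    (hconst : ∀ r ∈ Finset.Icc s (t - 1), Θhat r = Sighat) :
    frob (Sighat - (1 / ((t : ℝ) - (s : ℝ))) •
        ∑ r ∈ Finset.Icc s (t - 1), Matrix.vecMulVec (X r) (X r))
      ≤ 2 * lam * (T : ℝ) / ((t : ℝ) - (s : ℝ)) := by
  have hIco : Icc s (t - 1) = Ico s t := Finset.ext fun r => by simp only [mem_Icc, mem_Ico]; omega
  have hblock : Ico s t ⊆ Icc 1 T := fun r hr => by simp only [mem_Icc, mem_Ico] at hr ⊢; omega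
  rw [hIco] at hconst ⊢
  set D := Sighat - (1 / ((t : ℝ) - s)) • ∑ r ∈ Ico s t, vecMulVec (X r) (X r) with hD
  have hν : (0 : ℝ) < t - s := sub_pos.mpr (by exact_mod_cast hst)
  have hT : (0 : ℝ) < T := by exact_mod_cast (show 0 < T by omega)
  have hopt : ∀ ε ∈ Set.Ioo (0 : ℝ) 1,
      0 ≤ ((t : ℝ) - s) * (ε - 2) / (2 * T) * frob D ^ 2 + 2 * lam * frob D := fun ε hε =>
    nonneg_of_mul_nonneg_right (by
      linarith [hmin _ (posDef_add_block_perturbation hst hblock X hPD hconst hD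
          ⟨hε.1.le, hε.2⟩),
        gflsl_add_block_perturbation_le hst hblock X hlam.le Θhat hconst hD hε.1.le]) hε.1
  have h0 := nonneg_at_zero_of_forall_Ioo_nonneg (by fun_prop) hopt
  refine le_div_of_mul_sq_le (frob_nonneg D) hν (by positivity) ?_
  field_simp at h0
  linarith

/-- if a minimizer of the GFlsL objective over positive definite tuples is
constant on a block `{s, …, t-1}`, then its common value deviates from the block sample
second moment by at most `2λT/(t-s)` in Frobenius norm. -/
theorem stmt4 (p T : ℕ) (hp : 1 ≤ p) (hT : 1 ≤ T)
    (X : ℕ → Fin p → ℝ) (lam : ℝ) (hlam : 0 < lam)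
    (Θhat : ℕ → Matrix (Fin p) (Fin p) ℝ)
    (hPD : ∀ t ∈ Finset.Icc 1 T, (Θhat t).PosDef)
    (hmin : ∀ Θ : ℕ → Matrix (Fin p) (Fin p) ℝ,
      (∀ t ∈ Finset.Icc 1 T, (Θ t).PosDef) →
      gflsl p T X lam Θhat ≤ gflsl p T X lam Θ)
    (s t : ℕ) (hs : 1 ≤ s) (hst : s < t) (ht : t ≤ T + 1)
    (Sighat : Matrix (Fin p) (Fin p) ℝ)
    (hconst : ∀ r ∈ Finset.Icc s (t - 1), Θhat r = Sighat) :
    frob (Sighat - (1 / ((t : ℝ) - (s : ℝ))) •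
        ∑ r ∈ Finset.Icc s (t - 1), Matrix.vecMulVec (X r) (X r))
      ≤ 2 * lam * (T : ℝ) / ((t : ℝ) - (s : ℝ)) :=
  stmt4_general p T X lam hlam Θhat hPD hmin s t hs hst ht Sighat hconst
end
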